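/- arXiv:2511.08428 — 5 statements merged into one kernel-verified Lean document; each statement's English description precedes it below -/
import Mathlib

section
/- Let μ₀ > 0 satisfy 7μ₀² + 59μ₀ − 500 = 0. Then the characteristic polynomial of the 3×3 real matrix J₁⁰(μ₀) = [[−2, 0, 3], [−10/3, −μ₀, 0], [10/3, 50−μ₀, −5]] factors as (X + 7 + μ₀)(X² + 7μ₀), so the eigenvalues of J₁⁰(μ₀) over ℂ are −(7+μ₀), i√(7μ₀) and −i√(7μ₀); in particular J₁⁰(μ₀) has a pair of purely imaginary complex-conjugate eigenvalues ±iω₀ with ω₀ = √(7μ₀). -/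
open Polynomial Matrix

lemma mem_spec_aux (M : Matrix (Fin 3) (Fin 3) ℂ) (x : ℂ) :
    x ∈ spectrum ℂ M ↔ M.charpoly.eval x = 0 := by
  have key : M.charpoly.eval x = (algebraMap ℂ (Matrix (Fin 3) (Fin 3) ℂ) x - M).det := by
    rw [Matrix.charpoly, _root_.eval_det, matPolyEquiv_charmatrix]
    simp [algebraMap_eq_diagonal, Matrix.scalar]
  rw [spectrum.mem_iff, Matrix.isUnit_iff_isUnit_det, isUnit_iff_ne_zero, not_not, key]

/-- At `μ₀` with `7μ₀² + 59μ₀ − 500 = 0`, the characteristic polynomial of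
the unperturbed reduced Jacobian factors as `(X + 7 + μ₀)(X² + 7μ₀)`, and
its complex eigenvalues are `−(7+μ₀)`, `i√(7μ₀)` and `−i√(7μ₀)`. -/
theorem stmt_6 (μ₀ : ℝ) (hpos : 0 < μ₀) (h : 7 * μ₀ ^ 2 + 59 * μ₀ - 500 = 0)
    (J : Matrix (Fin 3) (Fin 3) ℝ)
    (hJ : J = !![-2, 0, 3; -10/3, -μ₀, 0; 10/3, 50 - μ₀, -5]) :
    J.charpoly = (X + C (7 + μ₀)) * (X ^ 2 + C (7 * μ₀)) ∧
    spectrum ℂ (J.map (Complex.ofReal)) =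
      {-(7 + (μ₀ : ℂ)), Complex.I * (Real.sqrt (7 * μ₀) : ℂ),
        -(Complex.I * (Real.sqrt (7 * μ₀) : ℂ))} := by
  have hcp : J.charpoly = (X + C (7 + μ₀)) * (X ^ 2 + C (7 * μ₀)) := by
    apply Polynomial.funext
    intro x
    rw [Matrix.charpoly, _root_.eval_det, matPolyEquiv_charmatrix]
    simp only [eval_sub, eval_X, eval_C, Polynomial.eval_sub]
    rw [Matrix.det_fin_three]
    subst hJ
    simp [Matrix.scalar, Matrix.smul_apply, Matrix.sub_apply, Matrix.map_apply]
    ring_nf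
    linear_combination -h
  refine ⟨hcp, ?_⟩
  set s : ℝ := Real.sqrt (7 * μ₀) with hs
  have hs2 : (s : ℂ) ^ 2 = (7 * μ₀ : ℝ) := by
    norm_cast
    exact Real.sq_sqrt (by positivity)
  ext x
  rw [mem_spec_aux, show (Complex.ofReal : ℝ → ℂ) = ⇑Complex.ofRealHom from rfl,
    Matrix.charpoly_map, hcp]
  simp only [Polynomial.map_mul, Polynomial.map_add, Polynomial.map_pow, Polynomial.map_X,
    Polynomial.map_C, Complex.ofRealHom_eq_coe, eval_mul, eval_add, eval_pow, eval_X, eval_C,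
    Complex.coe_algebraMap]
  have factor : (x ^ 2 + ((7 * μ₀ : ℝ) : ℂ)) = (x - Complex.I * s) * (x + Complex.I * s) := by
    rw [← hs2]; ring_nf; rw [Complex.I_sq]; ring
  rw [factor, Set.mem_insert_iff, Set.mem_insert_iff, Set.mem_singleton_iff]
  push_cast
  constructor
  · intro hx
    rcases mul_eq_zero.mp hx with h1 | h2
    · left; linear_combination h1
    · rcases mul_eq_zero.mp h2 with h3 | h4
      · right; left; linear_combination h3
      · right; right; linear_combination h4
  · rintro (rfl | rfl | rfl) <;> ring
end

section
/- For μ > 0 and ε near 0, let J₁(μ,ε) = [[−2, 0, 3], [−10/3 + εd₁(μ,ε), −μ + εd₂(μ,ε), 0], [10/3, 50 − μ + εd₂(μ,ε), −5 − εx₀(μ,ε)]], where d₁(μ,ε) = 10μ(μ−50)/(25+3εμ²), d₂(μ,ε) = 3μ²(μ−50)/(25+3εμ²), x₀(μ,ε) = 15μ(50−μ)/(25+3εμ²), and write its characteristic polynomial as X³ + a₁(μ,ε)X² + a₂(μ,ε)X + a₃(μ,ε). Define G(μ,ε) = a₁(μ,ε)a₂(μ,ε) − a₃(μ,ε). Then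 for every μ > 0, G(μ,0) = 7μ² + 59μ − 500, and the partial derivative ∂G/∂μ at (μ₀, 0), where μ₀ = (−59+√17481)/14, equals 14μ₀ + 59 ≠ 0. -/
open Polynomial Matrix

/-- The reduced Jacobian `J₁(μ,ε)`. -/
noncomputable def J1 (μ ε : ℝ) : Matrix (Fin 3) (Fin 3) ℝ :=
  !![-2, 0, 3;
     -10/3 + ε * (10 * μ * (μ - 50) / (25 + 3 * ε * μ ^ 2)),
       -μ + ε * (3 * μ ^ 2 * (μ - 50) / (25 + 3 * ε * μ ^ 2)), 0;
     10/3, 50 - μ + ε * (3 * μ ^ 2 * (μ - 50) / (25 + 3 * ε * μ ^ 2)),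
       -5 - ε * (15 * μ * (50 - μ) / (25 + 3 * ε * μ ^ 2))]

/-- The Routh–Hurwitz quantity `G(μ,ε) = a₁a₂ − a₃` built from the
characteristic polynomial `X³ + a₁X² + a₂X + a₃` of `J₁(μ,ε)`. -/
noncomputable def Gfun (μ ε : ℝ) : ℝ :=
  (J1 μ ε).charpoly.coeff 2 * (J1 μ ε).charpoly.coeff 1 - (J1 μ ε).charpoly.coeff 0

lemma cp3 (M : Matrix (Fin 3) (Fin 3) ℝ) :
    M.charpoly = (X - C (M 0 0)) * ((X - C (M 1 1)) * (X - C (M 2 2)) - (-C (M 1 2)) * (-C (M 2 1)))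
      - (-C (M 0 1)) * ((-C (M 1 0)) * (X - C (M 2 2)) - (-C (M 1 2)) * (-C (M 2 0)))
      + (-C (M 0 2)) * ((-C (M 1 0)) * (-C (M 2 1)) - (X - C (M 1 1)) * (-C (M 2 0))) := by
  rw [Matrix.charpoly, Matrix.det_fin_three]
  simp [charmatrix_apply_eq, charmatrix_apply_ne]
  ring

lemma cpJ (μ : ℝ) : (J1 μ 0).charpoly
    = X^3 + C (7 + μ) * X^2 + C (7*μ) * X + C (500 - 10*μ) := by
  rw [cp3]
  apply Polynomial.funext
  intro x
  simp [J1]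
  ring

lemma Geq (μ : ℝ) : Gfun μ 0 = 7 * μ ^ 2 + 59 * μ - 500 := by
  simp only [Gfun, cpJ, coeff_add, coeff_C_mul, coeff_X_pow, coeff_C]
  norm_num [Polynomial.coeff_X]
  ring

/-- `G(μ,0) = 7μ² + 59μ − 500` for every `μ > 0`, and
`∂G/∂μ (μ₀, 0) = 14μ₀ + 59 ≠ 0` where `μ₀ = (−59+√17481)/14`. -/
theorem stmt_7 :
    (∀ μ : ℝ, 0 < μ → Gfun μ 0 = 7 * μ ^ 2 + 59 * μ - 500) ∧
    (deriv (fun μ : ℝ => Gfun μ 0) ((-59 + Real.sqrt 17481) / 14)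
        = 14 * ((-59 + Real.sqrt 17481) / 14) + 59) ∧
    14 * ((-59 + Real.sqrt 17481) / 14) + 59 ≠ 0 := by
  refine ⟨fun μ _ => Geq μ, ?_, ?_⟩
  · set x := ((-59 + Real.sqrt 17481) / 14 : ℝ)
    have hfun : (fun μ : ℝ => Gfun μ 0) = fun μ => 7 * μ ^ 2 + 59 * μ - 500 :=
      funext Geq
    rw [hfun]
    have h : HasDerivAt (fun μ : ℝ => 7 * μ ^ 2 + 59 * μ - 500) (14 * x + 59) x := by
      have : HasDerivAt (fun μ : ℝ => 7 * μ ^ 2 + 59 * μ - 500) (7 * ((2:ℕ) * x ^ (2 - 1)) + 59 * 1) x := (((hasDerivAt_pow 2 x).const_mul 7).add ((hasDerivAt_id x).const_mul 59)).sub_const 500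
      convert this using 1
      simp; ring
    exact h.deriv
  · have h : (0:ℝ) < Real.sqrt 17481 := Real.sqrt_pos.mpr (by norm_num)
    have : 14 * ((-59 + Real.sqrt 17481) / 14) + 59 = Real.sqrt 17481 := by ring
    rw [this]; exact ne_of_gt h
end

section
/- Let μ₀ > 0 satisfy 7μ₀² + 59μ₀ − 500 = 0, set ω₀ = √(7μ₀), and let A₀ be the 4×4 complex matrix [[−2, 0, 0, 3], [−10/3, −μ₀, 0, 0], [0, 0, 0, 0], [10/3, 50−μ₀, 0, −5]]. Then the vector q₀ = (3(μ₀ + iω₀), −10, 0, −5μ₀ + iω₀(2+μ₀)) ∈ ℂ⁴ satisfies A₀ q₀ = iω₀ q₀; that is, q₀ is a right eigenvector of A₀ for the eigenvalue iω₀. -/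
open Matrix

/-- The Jacobian at `P₀(μ, 0)`. -/
noncomputable def jacobianAtZero (μ : ℂ) : Matrix (Fin 4) (Fin 4) ℂ :=
  !![-2, 0, 0, 3;
     -10/3, -μ, 0, 0;
     0, 0, 0, 0;
     10/3, 50 - μ, 0, -5]

def hopfEigenvector (μ ω : ℂ) : Fin 4 → ℂ :=
  ![3 * (μ + Complex.I * ω), -10, 0, -5 * μ + Complex.I * ω * (2 + μ)]

/- Only the first and fourth rows are not identities in `μ, ω`: the first needs `ω² = 7μ`,
the fourth needs it together with `7μ² + 59μ = 500`. -/
theorem jacobianAtZero_mulVec_hopfEigenvector {μ ω : ℂ} (hω : ω ^ 2 = 7 * μ)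
    (hμ : 7 * μ ^ 2 + 59 * μ - 500 = 0) :
    (jacobianAtZero μ).mulVec (hopfEigenvector μ ω) = (Complex.I * ω) • hopfEigenvector μ ω := by
  ext i
  fin_cases i <;>
    simp [jacobianAtZero, hopfEigenvector, mulVec, dotProduct, Fin.sum_univ_succ]
  · linear_combination 3 * hω - 3 * ω ^ 2 * Complex.I_sq
  · ring
  · linear_combination hμ + (2 + μ) * hω - (2 + μ) * ω ^ 2 * Complex.I_sq

/-- `q₀` is a right eigenvector of the `ε = 0` Jacobian `A₀` for the
eigenvalue `iω₀`, `ω₀ = √(7μ₀)`. -/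
theorem stmt_10 (μ₀ : ℝ) (hμ : 0 < μ₀) (h : 7 * μ₀ ^ 2 + 59 * μ₀ - 500 = 0)
    (ω₀ : ℝ) (hω : ω₀ = Real.sqrt (7 * μ₀))
    (A₀ : Matrix (Fin 4) (Fin 4) ℂ)
    (hA : A₀ = !![-2, 0, 0, 3;
                  -10/3, -(μ₀ : ℂ), 0, 0;
                  0, 0, 0, 0;
                  10/3, 50 - (μ₀ : ℂ), 0, -5])
    (q₀ : Fin 4 → ℂ)
    (hq : q₀ = ![3 * ((μ₀ : ℂ) + Complex.I * (ω₀ : ℂ)), -10, 0,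
                 -5 * (μ₀ : ℂ) + Complex.I * (ω₀ : ℂ) * (2 + (μ₀ : ℂ))]) :
    A₀.mulVec q₀ = (Complex.I * (ω₀ : ℂ)) • q₀ := by
  have hω_sq : ω₀ ^ 2 = 7 * μ₀ := by rw [hω, Real.sq_sqrt (by linarith)]
  subst hA hq
  exact jacobianAtZero_mulVec_hopfEigenvector (by exact_mod_cast hω_sq) (by exact_mod_cast h)
end

section
/- Let μ₀ > 0 satisfy 7μ₀² + 59μ₀ − 500 = 0, set ω₀ = √(7μ₀), and let A₀ be the 4×4 complex matrix [[−2, 0, 0, 3], [−10/3, −μ₀, 0, 0], [0, 0, 0, 0], [10/3, 50−μ₀, 0, −5]]. Then the vector p₀ = (2μ₀ + iω₀(5+μ₀), −150 + 3μ₀, 0, −3μ₀ + 3iω₀) ∈ ℂ⁴ satisfies A₀ᵀ p₀ = −iω₀ p₀; that is, p₀ is a left eigenvector of A₀ for the eigenvalue iω₀ (an eigenvector of the transpose for −iω₀). -/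
open Matrix

/-- `ω² = 7μ` is all the fourth coordinate needs; the quadratic relation for `μ` enters only in
the first coordinate. -/
theorem transpose_mulVec_eq_neg_I_mul_smul (μ ω : ℂ) (hω : ω ^ 2 = 7 * μ)
    (hμ : 7 * μ ^ 2 + 59 * μ - 500 = 0) :
    (!![-2, 0, 0, 3; -10/3, -μ, 0, 0; 0, 0, 0, 0; 10/3, 50 - μ, 0, -5] : Matrix (Fin 4) (Fin 4) ℂ)ᵀ
        *ᵥ ![2 * μ + Complex.I * ω * (5 + μ), -150 + 3 * μ, 0, -3 * μ + 3 * Complex.I * ω] =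
      (-(Complex.I * ω)) • ![2 * μ + Complex.I * ω * (5 + μ), -150 + 3 * μ, 0,
        -3 * μ + 3 * Complex.I * ω] := by
  ext i
  fin_cases i <;>
    simp only [mulVec, dotProduct, Fin.sum_univ_four, Fin.reduceFinMk, Fin.zero_eta, Fin.mk_one,
      Fin.isValue, transpose_apply, of_apply, cons_val', cons_val, cons_val_zero, cons_val_one,
      cons_val_fin_one, Pi.smul_apply, smul_eq_mul]
  · linear_combination -(5 + μ) * hω - hμ + ω ^ 2 * (5 + μ) * Complex.I_sq
  · ring
  · ring
  · linear_combination -3 * hω + 3 * ω ^ 2 * Complex.I_sq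

/-- `p₀` is a left eigenvector of the `ε = 0` Jacobian `A₀` for the
eigenvalue `iω₀`: it satisfies `A₀ᵀ p₀ = −iω₀ p₀`. -/
theorem stmt_11 (μ₀ : ℝ) (hμ : 0 < μ₀) (h : 7 * μ₀ ^ 2 + 59 * μ₀ - 500 = 0)
    (ω₀ : ℝ) (hω : ω₀ = Real.sqrt (7 * μ₀))
    (A₀ : Matrix (Fin 4) (Fin 4) ℂ)
    (hA : A₀ = !![-2, 0, 0, 3;
                  -10/3, -(μ₀ : ℂ), 0, 0;
                  0, 0, 0, 0;
                  10/3, 50 - (μ₀ : ℂ), 0, -5])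
    (p₀ : Fin 4 → ℂ)
    (hp : p₀ = ![2 * (μ₀ : ℂ) + Complex.I * (ω₀ : ℂ) * (5 + (μ₀ : ℂ)),
                 -150 + 3 * (μ₀ : ℂ), 0,
                 -3 * (μ₀ : ℂ) + 3 * Complex.I * (ω₀ : ℂ)]) :
    A₀ᵀ.mulVec p₀ = (-(Complex.I * (ω₀ : ℂ))) • p₀ := by
  have hω_sq : ω₀ ^ 2 = 7 * μ₀ := by rw [hω, Real.sq_sqrt (by positivity)]
  subst hA hp
  exact transpose_mulVec_eq_neg_I_mul_smul _ _ (by exact_mod_cast hω_sq) (by exact_mod_cast h)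
end

section
/- Let μ₀ > 0 with μ₀ ≠ 50, ω₀ = √(7μ₀), δ₀ = 5/(3μ₀), and define B : ℂ⁴ × ℂ⁴ → ℂ⁴ by B(u,v) = (0, −δ₀(u₁v₂ + u₂v₁) − u₂v₂, 0, δ₀(u₁v₂ + u₂v₁)). Let q₀ = (3(μ₀ + iω₀), −10, 0, −5μ₀ + iω₀(2+μ₀)), p₀ = (2μ₀ + iω₀(5+μ₀), −150 + 3μ₀, 0, −3μ₀ + 3iω₀), and v₀ = (−30μ₀/(μ₀−50), 100/(μ₀−50), 0, −20μ₀/(μ₀−50)). Then B₂(q₀,v₀) = −500iω₀/(μ₀(μ₀−50)), B₄(q₀,v₀) = 500(2μ₀ + iω₀)/(μ₀(μ₀−50)), and the Hermitian inner product ⟨p₀, B(q₀,v₀)⟩ = Σₖ conj((p₀)ₖ)Bₖ(q₀,v₀) equals −1500·(2μ₀² − 7μ₀ + iω₀(4μ₀ − 50))/(μ₀(μ₀−50)). -/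
open Complex ComplexConjugate

/-! The symmetric part `q₁v₂ + q₂v₁` of `B(q₀, v₀)` is `300(2μ₀ + iω₀)/(μ₀ − 50)`; times
`δ₀ = 5/(3μ₀)` this is `B₄`, and in `B₂` the term `−q₂v₂ = 1000/(μ₀ − 50)` cancels the real part of
`−B₄`. As `B₁ = B₃ = 0`, the pairing with `p₀` only sees the second and fourth entries, and
`ω₀² = 7μ₀` turns it into the stated value. (Entries are numbered from 1 as in the paper; `Fin 4` counts from 0.) -/

def hopfForm (δ : ℂ) (u v : Fin 4 → ℂ) : Fin 4 → ℂ :=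
  ![0, -δ * (u 0 * v 1 + u 1 * v 0) - u 1 * v 1, 0, δ * (u 0 * v 1 + u 1 * v 0)]

def hopfRightVec (μ ω : ℂ) : Fin 4 → ℂ :=
  ![3 * (μ + I * ω), -10, 0, -5 * μ + I * ω * (2 + μ)]

def hopfLeftVec (μ ω : ℂ) : Fin 4 → ℂ :=
  ![2 * μ + I * ω * (5 + μ), -150 + 3 * μ, 0, -3 * μ + 3 * I * ω]

noncomputable def hopfCenterVec (μ : ℂ) : Fin 4 → ℂ :=
  ![-30 * μ / (μ - 50), 100 / (μ - 50), 0, -20 * μ / (μ - 50)]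

lemma sum_conj_mul_hopfForm (p : Fin 4 → ℂ) (δ : ℂ) (u v : Fin 4 → ℂ) :
    ∑ k, conj (p k) * hopfForm δ u v k
      = conj (p 1) * hopfForm δ u v 1 + conj (p 3) * hopfForm δ u v 3 := by
  simp [Fin.sum_univ_four, hopfForm]

section

variable {μ ω : ℂ}

lemma hopfRightVec_cross_hopfCenterVec (h50 : μ - 50 ≠ 0) :
    hopfRightVec μ ω 0 * hopfCenterVec μ 1 + hopfRightVec μ ω 1 * hopfCenterVec μ 0
      = 300 * (2 * μ + I * ω) / (μ - 50) := by
  simp only [hopfRightVec, hopfCenterVec, Matrix.cons_val]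
  field_simp
  ring

lemma hopfForm_apply_three (hμ : μ ≠ 0) (h50 : μ - 50 ≠ 0) :
    hopfForm (5 / (3 * μ)) (hopfRightVec μ ω) (hopfCenterVec μ) 3
      = 500 * (2 * μ + I * ω) / (μ * (μ - 50)) := by
  simp only [hopfForm, Matrix.cons_val, hopfRightVec_cross_hopfCenterVec h50]
  field_simp
  ring

lemma hopfForm_apply_one (hμ : μ ≠ 0) (h50 : μ - 50 ≠ 0) :
    hopfForm (5 / (3 * μ)) (hopfRightVec μ ω) (hopfCenterVec μ) 1
      = -500 * I * ω / (μ * (μ - 50)) := by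
  simp only [hopfForm, Matrix.cons_val, hopfRightVec_cross_hopfCenterVec h50]
  simp only [hopfRightVec, hopfCenterVec, Matrix.cons_val]
  field_simp
  ring

end

lemma inner_hopfLeftVec_hopfForm {μ ω : ℝ} (hμ : μ ≠ 0) (h50 : μ ≠ 50) (hω : ω ^ 2 = 7 * μ) :
    ∑ k, conj (hopfLeftVec μ ω k) * hopfForm (5 / (3 * μ)) (hopfRightVec μ ω) (hopfCenterVec μ) k
      = -1500 * (2 * (μ : ℂ) ^ 2 - 7 * μ + I * ω * (4 * μ - 50)) / (μ * (μ - 50)) := by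
  have hμ' : (μ : ℂ) ≠ 0 := ofReal_ne_zero.mpr hμ
  have h50' : (μ : ℂ) - 50 ≠ 0 := sub_ne_zero.mpr (by exact_mod_cast h50)
  have hω' : (ω : ℂ) ^ 2 = 7 * μ := by exact_mod_cast hω
  rw [sum_conj_mul_hopfForm, hopfForm_apply_one hμ' h50', hopfForm_apply_three hμ' h50']
  simp only [hopfLeftVec, Matrix.cons_val, map_add, map_mul, map_neg, map_ofNat, conj_I,
    conj_ofReal]
  field_simp
  linear_combination 1500 * hω' - 1500 * (ω : ℂ) ^ 2 * I_sq

/-- Values of `B₂(q₀,v₀)`, `B₄(q₀,v₀)` and of the Hermitian inner product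
`⟨p₀, B(q₀,v₀)⟩ = −1500(2μ₀² − 7μ₀ + iω₀(4μ₀ − 50))/(μ₀(μ₀−50))`. -/
theorem stmt_15 (μ₀ ω₀ δ₀ : ℝ) (hμ : 0 < μ₀) (hμ' : μ₀ ≠ 50)
    (hω : ω₀ = Real.sqrt (7 * μ₀)) (hδ : δ₀ = 5 / (3 * μ₀))
    (B : (Fin 4 → ℂ) → (Fin 4 → ℂ) → (Fin 4 → ℂ))
    (hB : ∀ u v, B u v =
      ![0, -(δ₀ : ℂ) * (u 0 * v 1 + u 1 * v 0) - u 1 * v 1, 0,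
        (δ₀ : ℂ) * (u 0 * v 1 + u 1 * v 0)])
    (q₀ p₀ v₀ : Fin 4 → ℂ)
    (hq : q₀ = ![3 * ((μ₀ : ℂ) + Complex.I * (ω₀ : ℂ)), -10, 0,
                 -5 * (μ₀ : ℂ) + Complex.I * (ω₀ : ℂ) * (2 + (μ₀ : ℂ))])
    (hp : p₀ = ![2 * (μ₀ : ℂ) + Complex.I * (ω₀ : ℂ) * (5 + (μ₀ : ℂ)),
                 -150 + 3 * (μ₀ : ℂ), 0,
                 -3 * (μ₀ : ℂ) + 3 * Complex.I * (ω₀ : ℂ)])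
    (hv : v₀ = ![-30 * (μ₀ : ℂ) / ((μ₀ : ℂ) - 50), 100 / ((μ₀ : ℂ) - 50), 0,
                 -20 * (μ₀ : ℂ) / ((μ₀ : ℂ) - 50)]) :
    B q₀ v₀ 1 = -500 * Complex.I * (ω₀ : ℂ) / ((μ₀ : ℂ) * ((μ₀ : ℂ) - 50)) ∧
    B q₀ v₀ 3 = 500 * (2 * (μ₀ : ℂ) + Complex.I * (ω₀ : ℂ))
        / ((μ₀ : ℂ) * ((μ₀ : ℂ) - 50)) ∧
    (∑ k, (starRingEnd ℂ) (p₀ k) * B q₀ v₀ k)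
      = -1500 * (2 * (μ₀ : ℂ) ^ 2 - 7 * (μ₀ : ℂ)
          + Complex.I * (ω₀ : ℂ) * (4 * (μ₀ : ℂ) - 50))
        / ((μ₀ : ℂ) * ((μ₀ : ℂ) - 50)) := by
  have hμ0 : (μ₀ : ℂ) ≠ 0 := ofReal_ne_zero.mpr hμ.ne'
  have h50 : (μ₀ : ℂ) - 50 ≠ 0 := sub_ne_zero.mpr (by exact_mod_cast hμ')
  have hω2 : ω₀ ^ 2 = 7 * μ₀ := by rw [hω, Real.sq_sqrt (by positivity)]
  have hB' : B = hopfForm (5 / (3 * μ₀)) := by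
    ext u v : 2
    rw [hB, hδ]
    push_cast
    rfl
  subst hB' hq hp hv
  exact ⟨hopfForm_apply_one hμ0 h50, hopfForm_apply_three hμ0 h50,
    inner_hopfLeftVec_hopfForm hμ.ne' hμ' hω2⟩
end
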